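/- arXiv:2509.10669 — 3 statements merged into one kernel-verified Lean document; each statement's English description precedes it below -/
import Mathlib

section
/- Let f be a symmetric real-valued function on pairs of positive integers. For all n ≥ 4 and i ∈ {1,2}, the number of link vectors L ∈ {1,2}^{n−2} with last entry L_n = i satisfying TI_f(L) = M_f(n,i) is exactly n_t(n,i) + 1. -/
noncomputable section
open Classical

/-- Constant term of a degree-based topological index on polyomino chains. -/
def cst (f : ℕ → ℕ → ℝ) : ℝ := 4 * f 2 3 + 2 * f 2 2 + f 3 3

/-- `gone f i` is `g_f(i)`, the increment for the first link (n = 3). -/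
def gone (f : ℕ → ℕ → ℝ) (i : ℕ) : ℝ :=
  if i = 1 then 3 * f 3 3 else 2 * f 3 4 + 2 * f 2 4 - f 3 3

/-- `gpair f i j` is `g_f(i,j)`, the increment for a link `j` after a link `i`. -/
def gpair (f : ℕ → ℕ → ℝ) (i j : ℕ) : ℝ :=
  if i = 1 then
    (if j = 1 then 3 * f 3 3 else 3 * f 3 4 + f 2 4 + f 2 3 - 2 * f 3 3)
  else
    (if j = 1 then f 3 4 - f 2 4 + f 2 3 + 2 * f 3 3 else f 4 4 + 2 * f 2 4)

/-- Sum of `gpair` increments along a list of links, given the previous link. -/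
def chainSum (f : ℕ → ℕ → ℝ) : ℕ → List ℕ → ℝ
  | _, [] => 0
  | a, b :: t => gpair f a b + chainSum f b t

/-- `TI f L` is the degree-based topological index of the polyomino chain with
link vector `L = [L_3, …, L_n]`. -/
def TI (f : ℕ → ℕ → ℝ) : List ℕ → ℝ
  | [] => cst f
  | a :: t => cst f + gone f a + chainSum f a t

/-- `ValidLinks n L` means `L` is a link vector of a polyomino chain with `n` squares:
it has length `n - 2` and entries in `{1, 2}`. -/
def ValidLinks (n : ℕ) (L : List ℕ) : Prop :=
  L.length = n - 2 ∧ ∀ x ∈ L, x = 1 ∨ x = 2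

/-- `Mmax f n i` is the maximum of `TI f` over link vectors of length `n - 2`
with last entry `i`. -/
def Mmax (f : ℕ → ℕ → ℝ) (n i : ℕ) : ℝ :=
  sSup {t : ℝ | ∃ L, ValidLinks n L ∧ L.getLast? = some i ∧ TI f L = t}

/-- `mMin f n i` is the minimum of `TI f` over link vectors of length `n - 2`
with last entry `i`. -/
def mMin (f : ℕ → ℕ → ℝ) (n i : ℕ) : ℝ :=
  sInf {t : ℝ | ∃ L, ValidLinks n L ∧ L.getLast? = some i ∧ TI f L = t}

/-- The tie count `n_t(n, i)`. -/
def nt (f : ℕ → ℕ → ℝ) : ℕ → ℕ → ℕ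
  | n + 4, i =>
    if Mmax f (n + 3) 1 + gpair f 1 i = Mmax f (n + 3) 2 + gpair f 2 i then
      1 + nt f (n + 3) 1 + nt f (n + 3) 2
    else if Mmax f (n + 3) 1 + gpair f 1 i > Mmax f (n + 3) 2 + gpair f 2 i then
      nt f (n + 3) 1
    else
      nt f (n + 3) 2
  | _, _ => 0

/-- The function defining the augmented Zagreb index: `f(x,y) = (xy/(x+y-2))³`. -/
def fAZI : ℕ → ℕ → ℝ := fun x y => ((x * y : ℝ) / (x + y - 2)) ^ 3




/-- The set of valid link vectors with last entry `i`. -/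
def SS (n i : ℕ) : Set (List ℕ) := {L | ValidLinks n L ∧ L.getLast? = some i}

/-- The set of maximizers. -/
def Mset (f : ℕ → ℕ → ℝ) (n i : ℕ) : Set (List ℕ) :=
  {L ∈ SS n i | TI f L = Mmax f n i}

lemma Mmax_eq_sSup (f : ℕ → ℕ → ℝ) (n i : ℕ) :
    Mmax f n i = sSup (TI f '' SS n i) := by
  unfold Mmax SS
  congr 1
  ext t
  constructor
  · rintro ⟨L, h1, h2, h3⟩; exact ⟨L, ⟨h1, h2⟩, h3⟩
  · rintro ⟨L, ⟨h1, h2⟩, h3⟩; exact ⟨L, h1, h2, h3⟩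

/-- last element helper -/
def lastOf (a : ℕ) : List ℕ → ℕ
  | [] => a
  | b :: t => lastOf b t

lemma getLast?_eq_lastOf (a : ℕ) (t : List ℕ) :
    (a :: t).getLast? = some (lastOf a t) := by
  induction t generalizing a with
  | nil => rfl
  | cons b t ih => rw [List.getLast?_cons_cons, ih]; rfl

lemma chainSum_concat (f : ℕ → ℕ → ℝ) (a i : ℕ) (t : List ℕ) :
    chainSum f a (t ++ [i]) = chainSum f a t + gpair f (lastOf a t) i := by
  induction t generalizing a with
  | nil => simp [chainSum, lastOf]
  | cons b t ih => simp only [List.cons_append, chainSum, List.append_eq, ih b, lastOf]; ring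

lemma TI_concat (f : ℕ → ℕ → ℝ) (i j : ℕ) (L : List ℕ) (h : L.getLast? = some j) :
    TI f (L ++ [i]) = TI f L + gpair f j i := by
  obtain ⟨a, t, rfl⟩ : ∃ a t, L = a :: t := by
    cases L with
    | nil => simp at h
    | cons a t => exact ⟨a, t, rfl⟩
  rw [getLast?_eq_lastOf] at h
  obtain rfl : lastOf a t = j := by injection h
  show TI f (a :: (t ++ [i])) = _
  simp only [TI, chainSum_concat]
  ring

lemma SS_three (i : ℕ) (hi : i = 1 ∨ i = 2) : SS 3 i = {[i]} := by
  ext L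
  simp only [SS, ValidLinks, Set.mem_setOf_eq, Set.mem_singleton_iff]
  constructor
  · rintro ⟨⟨hlen, hmem⟩, hlast⟩
    obtain ⟨a, rfl⟩ := List.length_eq_one_iff.mp hlen
    simp only [List.getLast?_singleton, Option.some.injEq] at hlast
    rw [hlast]
  · rintro rfl
    refine ⟨⟨rfl, ?_⟩, by simp⟩
    intro x hx
    simp only [List.mem_singleton] at hx
    rw [hx]; exact hi

lemma mem_SS_concat {n i j : ℕ} (hn : 4 ≤ n) (hi : i = 1 ∨ i = 2) {L : List ℕ}
    (h : L ∈ SS (n - 1) j) : L ++ [i] ∈ SS n i := by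
  obtain ⟨⟨hlen, hmem⟩, hlast⟩ := h
  refine ⟨⟨?_, ?_⟩, List.getLast?_concat⟩
  · rw [List.length_append, hlen]; simp; omega
  · intro x hx
    rcases List.mem_append.mp hx with h | h
    · exact hmem x h
    · simp only [List.mem_singleton] at h; rw [h]; exact hi

lemma SS_decomp {n i : ℕ} (hn : 4 ≤ n) {L : List ℕ} (h : L ∈ SS n i) :
    ∃ j L', (j = 1 ∨ j = 2) ∧ L' ∈ SS (n - 1) j ∧ L = L' ++ [i] := by
  obtain ⟨⟨hlen, hmem⟩, hlast⟩ := h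
  have hne : L ≠ [] := by
    intro h; rw [h] at hlen; simp at hlen; omega
  have hL : L.dropLast ++ [L.getLast hne] = L := List.dropLast_append_getLast hne
  have hlast' : L.getLast hne = i := by
    rw [List.getLast?_eq_getLast hne] at hlast; injection hlast
  have hlen' : L.dropLast.length = n - 1 - 2 := by
    rw [List.length_dropLast, hlen]; omega
  have hne' : L.dropLast ≠ [] := by
    intro h; rw [h] at hlen'; simp at hlen'; omega
  refine ⟨L.dropLast.getLast hne', L.dropLast, ?_, ⟨⟨hlen', ?_⟩, ?_⟩, ?_⟩
  · exact hmem _ (List.dropLast_subset L (List.getLast_mem hne'))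
  · exact fun x hx => hmem x (List.dropLast_subset L hx)
  · exact List.getLast?_eq_getLast hne'
  · rw [← hlast']; exact hL.symm

lemma SS_finite : ∀ n : ℕ, 3 ≤ n → ∀ i, (SS n i).Finite := by
  intro n hn
  induction n, hn using Nat.le_induction with
  | base =>
    intro i
    apply Set.Finite.subset (Set.finite_singleton [i])
    intro L hL
    obtain ⟨⟨hlen, _⟩, hlast⟩ := hL
    obtain ⟨a, rfl⟩ := List.length_eq_one_iff.mp hlen
    simp only [List.getLast?_singleton, Option.some.injEq] at hlast
    simp [hlast]
  | succ n hn ih =>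
    intro i
    apply Set.Finite.subset (((ih 1).image (· ++ [i])).union ((ih 2).image (· ++ [i])))
    intro L hL
    obtain ⟨j, L', hj, hL', rfl⟩ := SS_decomp (by omega) hL
    have : n + 1 - 1 = n := by omega
    rw [this] at hL'
    rcases hj with rfl | rfl
    · exact Or.inl ⟨L', hL', rfl⟩
    · exact Or.inr ⟨L', hL', rfl⟩

lemma SS_nonempty : ∀ n : ℕ, 3 ≤ n → ∀ i, i = 1 ∨ i = 2 → (SS n i).Nonempty := by
  intro n hn
  induction n, hn using Nat.le_induction with
  | base => intro i hi; exact ⟨[i], by rw [SS_three i hi]; rfl⟩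
  | succ n hn ih =>
    intro i hi
    obtain ⟨L, hL⟩ := ih 1 (Or.inl rfl)
    refine ⟨L ++ [i], ?_⟩
    have := mem_SS_concat (n := n + 1) (j := 1) (by omega) hi (by simpa using hL)
    simpa using this

/-- The maximum is attained. -/
lemma Mmax_mem (f : ℕ → ℕ → ℝ) (n i : ℕ) (hn : 3 ≤ n) (hi : i = 1 ∨ i = 2) :
    ∃ L ∈ SS n i, TI f L = Mmax f n i := by
  rw [Mmax_eq_sSup]
  have h1 : (TI f '' SS n i).Nonempty := (SS_nonempty n hn i hi).image _
  have h2 : (TI f '' SS n i).Finite := (SS_finite n hn i).image _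
  obtain ⟨L, hL, hEq⟩ := h1.csSup_mem h2
  exact ⟨L, hL, hEq⟩

lemma le_Mmax (f : ℕ → ℕ → ℝ) (n i : ℕ) (hn : 3 ≤ n) {L : List ℕ} (hL : L ∈ SS n i) :
    TI f L ≤ Mmax f n i := by
  rw [Mmax_eq_sSup]
  exact le_csSup ((SS_finite n hn i).image _).bddAbove ⟨L, hL, rfl⟩

lemma Mmax_rec (f : ℕ → ℕ → ℝ) (n i : ℕ) (hn : 4 ≤ n) (hi : i = 1 ∨ i = 2) :
    Mmax f n i = max (Mmax f (n-1) 1 + gpair f 1 i) (Mmax f (n-1) 2 + gpair f 2 i) := by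
  have hn' : 3 ≤ n - 1 := by omega
  apply le_antisymm
  · obtain ⟨L, hL, hTI⟩ := Mmax_mem f n i (by omega) hi
    obtain ⟨j, L', hj, hL', rfl⟩ := SS_decomp hn hL
    rw [← hTI, TI_concat f i j L' hL'.2]
    rcases hj with rfl | rfl
    · exact le_max_of_le_left (by linarith [le_Mmax f (n-1) 1 hn' hL'])
    · exact le_max_of_le_right (by linarith [le_Mmax f (n-1) 2 hn' hL'])
  · apply max_le
    · obtain ⟨L, hL, hTI⟩ := Mmax_mem f (n-1) 1 hn' (Or.inl rfl)
      have := le_Mmax f n i (by omega) (mem_SS_concat hn hi hL)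
      rw [TI_concat f i 1 L hL.2, hTI] at this; exact this
    · obtain ⟨L, hL, hTI⟩ := Mmax_mem f (n-1) 2 hn' (Or.inr rfl)
      have := le_Mmax f n i (by omega) (mem_SS_concat hn hi hL)
      rw [TI_concat f i 2 L hL.2, hTI] at this; exact this

lemma mem_Mset_iff (f : ℕ → ℕ → ℝ) (n i : ℕ) (hn : 4 ≤ n) (hi : i = 1 ∨ i = 2)
    (L : List ℕ) :
    L ∈ Mset f n i ↔ ∃ j L', (j = 1 ∨ j = 2) ∧ L' ∈ Mset f (n-1) j ∧
      Mmax f (n-1) j + gpair f j i = Mmax f n i ∧ L = L' ++ [i] := by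
  have hn' : 3 ≤ n - 1 := by omega
  constructor
  · rintro ⟨hS, hTI⟩
    obtain ⟨j, L', hj, hL', rfl⟩ := SS_decomp hn hS
    rw [TI_concat f i j L' hL'.2] at hTI
    have h1 : TI f L' ≤ Mmax f (n-1) j := le_Mmax f (n-1) j hn' hL'
    have h2 : Mmax f (n-1) j + gpair f j i ≤ Mmax f n i := by
      rw [Mmax_rec f n i hn hi]
      rcases hj with rfl | rfl
      · exact le_max_left _ _
      · exact le_max_right _ _
    refine ⟨j, L', hj, ⟨hL', by linarith⟩, by linarith, rfl⟩
  · rintro ⟨j, L', hj, ⟨hS', hTI'⟩, hc, rfl⟩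
    refine ⟨mem_SS_concat hn hi hS', ?_⟩
    rw [TI_concat f i j L' hS'.2, hTI', hc]

lemma Mset_finite (f : ℕ → ℕ → ℝ) (n i : ℕ) (hn : 3 ≤ n) : (Mset f n i).Finite :=
  (SS_finite n hn i).subset (fun _ h => h.1)

lemma concat_inj (i : ℕ) : Function.Injective (fun L : List ℕ => L ++ [i]) :=
  fun _ _ h => List.append_cancel_right h

/-- tie case -/
lemma Mset_eq_tie (f : ℕ → ℕ → ℝ) (n i : ℕ) (hn : 4 ≤ n) (hi : i = 1 ∨ i = 2)
    (h : Mmax f (n-1) 1 + gpair f 1 i = Mmax f (n-1) 2 + gpair f 2 i) :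
    Mset f n i = (fun L => L ++ [i]) '' Mset f (n-1) 1 ∪
                 (fun L => L ++ [i]) '' Mset f (n-1) 2 := by
  have hmax : Mmax f n i = Mmax f (n-1) 1 + gpair f 1 i := by
    rw [Mmax_rec f n i hn hi, h, max_self]
  ext L
  rw [mem_Mset_iff f n i hn hi]
  constructor
  · rintro ⟨j, L', hj, hL', hc, rfl⟩
    rcases hj with rfl | rfl
    · exact Or.inl ⟨L', hL', rfl⟩
    · exact Or.inr ⟨L', hL', rfl⟩
  · rintro (⟨L', hL', rfl⟩ | ⟨L', hL', rfl⟩)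
    · exact ⟨1, L', Or.inl rfl, hL', hmax.symm, rfl⟩
    · exact ⟨2, L', Or.inr rfl, hL', by rw [← h, hmax], rfl⟩

/-- strict case -/
lemma Mset_eq_strict (f : ℕ → ℕ → ℝ) (n i : ℕ) (hn : 4 ≤ n) (hi : i = 1 ∨ i = 2)
    (j : ℕ) (hj : j = 1 ∨ j = 2)
    (h : Mmax f (n-1) (3-j) + gpair f (3-j) i < Mmax f (n-1) j + gpair f j i) :
    Mset f n i = (fun L => L ++ [i]) '' Mset f (n-1) j := by
  have hmax : Mmax f n i = Mmax f (n-1) j + gpair f j i := by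
    rw [Mmax_rec f n i hn hi]
    rcases hj with rfl | rfl
    · simp only [show (3:ℕ) - 1 = 2 from rfl] at h
      exact max_eq_left h.le
    · simp only [show (3:ℕ) - 2 = 1 from rfl] at h
      exact max_eq_right h.le
  ext L
  rw [mem_Mset_iff f n i hn hi]
  constructor
  · rintro ⟨j', L', hj', hL', hc, rfl⟩
    have : j' = j := by
      by_contra hne
      have h3 : j' = 3 - j := by omega
      rw [h3, hmax] at hc
      linarith
    rw [this] at hL'
    exact ⟨L', hL', rfl⟩
  · rintro ⟨L', hL', rfl⟩
    exact ⟨j, L', hj, hL', hmax.symm, rfl⟩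

lemma Mset_count (f : ℕ → ℕ → ℝ) : ∀ n : ℕ, 3 ≤ n → ∀ i, i = 1 ∨ i = 2 →
    (Mset f n i).ncard = nt f n i + 1 := by
  intro n hn
  induction n, hn using Nat.le_induction with
  | base =>
    intro i hi
    have h3 : Mset f 3 i = {[i]} := by
      apply Set.eq_singleton_iff_nonempty_unique_mem.mpr
      constructor
      · obtain ⟨L, hL, hTI⟩ := Mmax_mem f 3 i le_rfl hi
        exact ⟨L, hL, hTI⟩
      · intro L hL
        have := hL.1
        rw [SS_three i hi] at this
        exact this
    rw [h3, Set.ncard_singleton]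
    rfl
  | succ n hn ih =>
    intro i hi
    obtain ⟨m, rfl⟩ : ∃ m, n = m + 3 := ⟨n - 3, by omega⟩
    have hd : m + 3 + 1 - 1 = m + 3 := rfl
    have hinj := concat_inj i
    have hfin1 : (Mset f (m+3) 1).Finite := Mset_finite f (m+3) 1 (by omega)
    have hfin2 : (Mset f (m+3) 2).Finite := Mset_finite f (m+3) 2 (by omega)
    rcases lt_trichotomy (Mmax f (m+3) 1 + gpair f 1 i) (Mmax f (m+3) 2 + gpair f 2 i)
      with hlt | heq | hgt
    · -- c1 < c2 : winner is 2
      have hset := Mset_eq_strict f (m+3+1) i (by omega) hi 2 (Or.inr rfl)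
        (by rw [hd]; simpa using hlt)
      rw [hd] at hset
      rw [hset, Set.ncard_image_of_injective _ hinj, ih 2 (Or.inr rfl)]
      have hnt : nt f (m+3+1) i = nt f (m+3) 2 := by
        show nt f (m+4) i = _
        rw [nt]
        rw [if_neg (by linarith), if_neg (by linarith)]
      rw [hnt]
    · -- tie
      have hset := Mset_eq_tie f (m+3+1) i (by omega) hi (by rw [hd]; exact heq)
      rw [hd] at hset
      rw [hset, Set.ncard_union_eq ?_ (hfin1.image _) (hfin2.image _),
        Set.ncard_image_of_injective _ hinj, Set.ncard_image_of_injective _ hinj,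
        ih 1 (Or.inl rfl), ih 2 (Or.inr rfl)]
      · have hnt : nt f (m+3+1) i = 1 + nt f (m+3) 1 + nt f (m+3) 2 := by
          show nt f (m+4) i = _
          rw [nt, if_pos heq]
        rw [hnt]; ring
      · rw [Set.disjoint_left]
        rintro x ⟨L1, hL1, rfl⟩ ⟨L2, hL2, hEq⟩
        have : L2 = L1 := hinj hEq
        rw [this] at hL2
        have h1 := hL1.1.2
        have h2 := hL2.1.2
        rw [h1] at h2
        simp at h2
    · -- c1 > c2 : winner is 1
      have hset := Mset_eq_strict f (m+3+1) i (by omega) hi 1 (Or.inl rfl)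
        (by rw [hd]; simpa using hgt)
      rw [hd] at hset
      rw [hset, Set.ncard_image_of_injective _ hinj, ih 1 (Or.inl rfl)]
      have hnt : nt f (m+3+1) i = nt f (m+3) 1 := by
        show nt f (m+4) i = _
        rw [nt, if_neg (by linarith), if_pos (by exact hgt)]
      rw [hnt]


/-- the number of maximizing link vectors for `M_f(n,i)` is
exactly `n_t(n,i) + 1`. -/
theorem stmt6 (f : ℕ → ℕ → ℝ) (hsym : ∀ x y, f x y = f y x)
    (n : ℕ) (hn : 4 ≤ n) (i : ℕ) (hi : i = 1 ∨ i = 2) :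
    {L : List ℕ | ValidLinks n L ∧ L.getLast? = some i ∧ TI f L = Mmax f n i}.ncard
      = nt f n i + 1 := by
  have h : {L : List ℕ | ValidLinks n L ∧ L.getLast? = some i ∧ TI f L = Mmax f n i}
      = Mset f n i := by
    ext L
    simp only [Set.mem_setOf_eq, Mset, SS, Set.mem_setOf_eq, and_assoc]
  rw [h]
  exact Mset_count f n (by omega) i hi


end
end

section
/- Let f be a symmetric real-valued function on pairs of positive integers satisfying g_f(1,1) > max{ g_f(1,2), g_f(2,2), (g_f(1,2) + g_f(2,1))/2 }. If for some n ≥ 3 one has M_f(n,1) ≥ M_f(n,2), then M_f(n+1,1) > M_f(n+1,2). -/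
noncomputable section
open Classical

lemma chainSum_append (f : ℕ → ℕ → ℝ) :
    ∀ (t : List ℕ) (a b : ℕ),
      chainSum f a (t ++ [b]) = chainSum f a t + gpair f ((a :: t).getLast (by simp)) b := by
  intro t
  induction t with
  | nil => intro a b; simp [chainSum]
  | cons c t' ih =>
      intro a b
      show gpair f a c + chainSum f c (t' ++ [b]) = _
      rw [ih c b, List.getLast_cons (l := c :: t') (by simp)]
      simp only [chainSum]
      ring

lemma finLists (k : ℕ) : {L : List ℕ | L.length = k ∧ ∀ x ∈ L, x = 1 ∨ x = 2}.Finite := by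
  induction k with
  | zero =>
      apply Set.Finite.subset (Set.finite_singleton ([] : List ℕ))
      rintro L ⟨h1, _⟩
      simpa using List.length_eq_zero_iff.mp h1
  | succ k ih =>
      apply Set.Finite.subset
        (Set.Finite.image (fun p : ℕ × List ℕ => p.1 :: p.2)
          (Set.Finite.prod ((Set.finite_singleton 2).insert 1) ih))
      rintro L ⟨h1, h2⟩
      match L with
      | [] => simp at h1
      | a :: t =>
          exact ⟨(a, t), ⟨by simpa using h2 a (by simp),
            by simpa using h1, fun x hx => h2 x (by simp [hx])⟩, rfl⟩

def Sset (f : ℕ → ℕ → ℝ) (n i : ℕ) : Set ℝ :=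
  {t : ℝ | ∃ L, ValidLinks n L ∧ L.getLast? = some i ∧ TI f L = t}

lemma TI_append (f : ℕ → ℕ → ℝ) (L : List ℕ) (hL : L ≠ []) (b : ℕ) :
    TI f (L ++ [b]) = TI f L + gpair f (L.getLast hL) b := by
  match L with
  | a :: t =>
      show TI f (a :: (t ++ [b])) = _
      simp only [TI, chainSum_append f t a b]
      ring

lemma Sset_finite (f : ℕ → ℕ → ℝ) (n i : ℕ) : (Sset f n i).Finite := by
  apply Set.Finite.subset (Set.Finite.image (TI f) (finLists (n - 2)))
  rintro t ⟨L, hV, _, rfl⟩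
  exact ⟨L, hV, rfl⟩

lemma Sset_nonempty (f : ℕ → ℕ → ℝ) (n i : ℕ) (hn : 3 ≤ n) (hi : i = 1 ∨ i = 2) :
    (Sset f n i).Nonempty := by
  refine ⟨TI f (List.replicate (n - 3) i ++ [i]), List.replicate (n - 3) i ++ [i],
    ⟨?_, ?_⟩, ?_, rfl⟩
  · simp; omega
  · intro x hx
    simp at hx
    rcases hx with ⟨_, rfl⟩ | rfl <;> exact hi
  · exact List.getLast?_concat

lemma Sset_succ (f : ℕ → ℕ → ℝ) (n i : ℕ) (hn : 3 ≤ n) (hi : i = 1 ∨ i = 2) :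
    Sset f (n + 1) i =
      (fun t => t + gpair f 1 i) '' Sset f n 1 ∪ (fun t => t + gpair f 2 i) '' Sset f n 2 := by
  ext t
  constructor
  · rintro ⟨L', ⟨hlen, hmem⟩, hlast, rfl⟩
    have hL' : L' ≠ [] := by
      intro h; rw [h] at hlen; simp at hlen; omega
    have hdl : L'.dropLast ≠ [] := by
      have : L'.dropLast.length = n - 2 := by
        rw [List.length_dropLast, hlen]; omega
      intro h; rw [h] at this; simp at this; omega
    have hgl : L'.getLast hL' = i := by
      have := List.getLast?_eq_getLast hL'
      rw [hlast] at this
      exact (Option.some_injective _ this.symm)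
    have hrec : L'.dropLast ++ [i] = L' := by
      rw [← hgl]; exact List.dropLast_append_getLast hL'
    set L := L'.dropLast with hLdef
    have hTIsplit : TI f L' = TI f L + gpair f (L.getLast hdl) i := by
      conv_lhs => rw [← hrec]
      exact TI_append f L hdl i
    have hmemL : ∀ x ∈ L, x = 1 ∨ x = 2 := fun x hx =>
      hmem x (List.dropLast_sublist L' |>.mem hx)
    have hvalidL : ValidLinks n L := by
      refine ⟨?_, hmemL⟩
      rw [hLdef, List.length_dropLast, hlen]; omega
    have hj := hmemL (L.getLast hdl) (List.getLast_mem hdl)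
    have hlastL : L.getLast? = some (L.getLast hdl) := List.getLast?_eq_getLast hdl
    rcases hj with hj | hj
    · left
      exact ⟨TI f L, ⟨L, hvalidL, by rw [hlastL, hj], rfl⟩, by rw [hTIsplit, hj]⟩
    · right
      exact ⟨TI f L, ⟨L, hvalidL, by rw [hlastL, hj], rfl⟩, by rw [hTIsplit, hj]⟩
  · intro ht
    have key : ∀ j : ℕ, (j = 1 ∨ j = 2) → ∀ s ∈ Sset f n j, s + gpair f j i ∈ Sset f (n+1) i := by
      rintro j hjv s ⟨L, ⟨hlen, hmem⟩, hlast, rfl⟩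
      have hL : L ≠ [] := by
        intro h; rw [h] at hlen; simp at hlen; omega
      have hgl : L.getLast hL = j := by
        have := List.getLast?_eq_getLast hL
        rw [hlast] at this
        exact (Option.some_injective _ this.symm)
      refine ⟨L ++ [i], ⟨?_, ?_⟩, List.getLast?_concat, ?_⟩
      · simp [hlen]; omega
      · intro x hx
        rcases List.mem_append.mp hx with hx | hx
        · exact hmem x hx
        · simp at hx; rw [hx]; exact hi
      · rw [TI_append f L hL i, hgl]
    rcases ht with ⟨s, hs, rfl⟩ | ⟨s, hs, rfl⟩
    · exact key 1 (Or.inl rfl) s hs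
    · exact key 2 (Or.inr rfl) s hs

lemma csSup_image_add (A : Set ℝ) (hA : A.Finite) (hne : A.Nonempty) (c : ℝ) :
    sSup ((fun x => x + c) '' A) = sSup A + c := by
  apply le_antisymm
  · apply csSup_le (hne.image _)
    rintro y ⟨x, hx, rfl⟩
    exact add_le_add_left (le_csSup hA.bddAbove hx) c
  · exact le_csSup (hA.image _).bddAbove ⟨sSup A, hne.csSup_mem hA, rfl⟩

lemma Mmax_succ (f : ℕ → ℕ → ℝ) (n i : ℕ) (hn : 3 ≤ n) (hi : i = 1 ∨ i = 2) :
    Mmax f (n + 1) i = max (Mmax f n 1 + gpair f 1 i) (Mmax f n 2 + gpair f 2 i) := by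
  have h1f := Sset_finite f n 1
  have h2f := Sset_finite f n 2
  have h1n := Sset_nonempty f n 1 hn (Or.inl rfl)
  have h2n := Sset_nonempty f n 2 hn (Or.inr rfl)
  show sSup (Sset f (n+1) i) = _
  rw [Sset_succ f n i hn hi]
  rw [csSup_union ((h1f.image _).bddAbove) (h1n.image _) ((h2f.image _).bddAbove) (h2n.image _),
    csSup_image_add _ h1f h1n, csSup_image_add _ h2f h2n]
  rfl

/-- under the domination hypothesis, `M_f(n,1) ≥ M_f(n,2)`
implies `M_f(n+1,1) > M_f(n+1,2)`. -/
theorem stmt11 (f : ℕ → ℕ → ℝ) (hsym : ∀ x y, f x y = f y x)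
    (hdom : gpair f 1 1 > max (max (gpair f 1 2) (gpair f 2 2)) ((gpair f 1 2 + gpair f 2 1) / 2))
    (n : ℕ) (hn : 3 ≤ n) (h : Mmax f n 1 ≥ Mmax f n 2) :
    Mmax f (n + 1) 1 > Mmax f (n + 1) 2 := by
  rw [Mmax_succ f n 1 hn (Or.inl rfl), Mmax_succ f n 2 hn (Or.inr rfl)]
  have h12 : gpair f 1 2 < gpair f 1 1 :=
    lt_of_le_of_lt (le_trans (le_max_left _ _) (le_max_left _ _)) hdom
  have h22 : gpair f 2 2 < gpair f 1 1 :=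
    lt_of_le_of_lt (le_trans (le_max_right _ _) (le_max_left _ _)) hdom
  apply lt_of_lt_of_le _ (le_max_left (Mmax f n 1 + gpair f 1 1) (Mmax f n 2 + gpair f 2 1))
  apply max_lt
  · exact add_lt_add_right h12 _
  · exact add_lt_add_of_le_of_lt h h22

end
end

section
/- For the augmented Zagreb index (f(x,y) = (xy/(x+y−2))³) and every even n ≥ 8, the set of maximizers of TI_f among all link vectors in {1,2}^{n−2} is exactly the set of vectors of the form (1,2) repeated i times followed by (2,1) repeated (n−2)/2 − i times, for i = 1, …, (n−4)/2; in particular there are exactly (n−6)/2 + 1 maximizing link vectors. -/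
noncomputable section
open Classical

/-! ### Auxiliary machinery -/

def cnt (p : ℕ × ℕ) (L : List ℕ) : ℕ := (L.zip L.tail).count p

lemma cnt_single (p : ℕ × ℕ) (a : ℕ) : cnt p [a] = 0 := by simp [cnt]

lemma cnt_cons₂ (p : ℕ × ℕ) (a b : ℕ) (t : List ℕ) :
    cnt p (a :: b :: t) = (if (a, b) = p then 1 else 0) + cnt p (b :: t) := by
  simp [cnt, List.count_cons]
  omega

lemma cs_counts (f : ℕ → ℕ → ℝ) : ∀ (t : List ℕ) (a : ℕ),
    (∀ x ∈ a :: t, x = 1 ∨ x = 2) →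
    chainSum f a t = (cnt (1,1) (a::t) : ℝ) * gpair f 1 1 + (cnt (1,2) (a::t) : ℝ) * gpair f 1 2
      + (cnt (2,1) (a::t) : ℝ) * gpair f 2 1 + (cnt (2,2) (a::t) : ℝ) * gpair f 2 2 := by
  intro t
  induction t with
  | nil => intro a _; simp [chainSum, cnt_single]
  | cons b t ih =>
    intro a hmem
    have hb : ∀ x ∈ b :: t, x = 1 ∨ x = 2 := fun x hx => hmem x (List.mem_cons_of_mem _ hx)
    have ha := hmem a (by simp)
    have hb' := hmem b (by simp)
    have := ih b hb
    show gpair f a b + chainSum f b t = _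
    rw [this]
    rw [cnt_cons₂, cnt_cons₂, cnt_cons₂, cnt_cons₂]
    rcases ha with ha | ha <;> rcases hb' with hb'' | hb'' <;> subst ha <;> subst hb''
    all_goals simp [Prod.ext_iff]
    all_goals (try push_cast)
    all_goals ring


lemma flow : ∀ (t : List ℕ) (a : ℕ), (∀ x ∈ a :: t, x = 1 ∨ x = 2) →
    (cnt (1,2) (a::t) : ℤ) + (if a = 2 then 1 else 0)
      = (cnt (2,1) (a::t) : ℤ) + (if (a::t).getLastD 0 = 2 then 1 else 0) := by
  intro t
  induction t with
  | nil => intro a _; simp [cnt_single]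
  | cons b t ih =>
    intro a hmem
    have hb : ∀ x ∈ b :: t, x = 1 ∨ x = 2 := fun x hx => hmem x (List.mem_cons_of_mem _ hx)
    have ha := hmem a List.mem_cons_self
    have hb' := hmem b (by simp)
    have IH := ih b hb
    rw [cnt_cons₂, cnt_cons₂]
    have hlast : (a::b::t).getLastD 0 = (b::t).getLastD 0 := by
      simp [List.getLastD_cons]
    rw [hlast]
    push_cast
    rcases ha with ha | ha <;> rcases hb' with hb'' | hb'' <;> subst ha <;> subst hb'' <;>
      simp only [reduceIte, Prod.mk.injEq, OfNat.ofNat_ne_one, and_false,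
        false_and, and_self, if_true, if_false] <;> split_ifs at IH ⊢ <;> omega

lemma totalcnt : ∀ (t : List ℕ) (a : ℕ), (∀ x ∈ a :: t, x = 1 ∨ x = 2) →
    cnt (1,1) (a::t) + cnt (1,2) (a::t) + cnt (2,1) (a::t) + cnt (2,2) (a::t) = t.length := by
  intro t
  induction t with
  | nil => intro a _; simp [cnt_single]
  | cons b t ih =>
    intro a hmem
    have hb : ∀ x ∈ b :: t, x = 1 ∨ x = 2 := fun x hx => hmem x (List.mem_cons_of_mem _ hx)
    have ha := hmem a List.mem_cons_self
    have hb' := hmem b (by simp)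
    have IH := ih b hb
    rw [cnt_cons₂, cnt_cons₂, cnt_cons₂, cnt_cons₂]
    simp only [List.length_cons]
    rcases ha with ha | ha <;> rcases hb' with hb'' | hb'' <;> subst ha <;> subst hb'' <;>
      norm_num [Prod.ext_iff] at IH ⊢ <;> omega

lemma rep21_succ (k : ℕ) :
    (List.replicate (k+1) ([2,1] : List ℕ)).flatten = 2 :: 1 :: (List.replicate k ([2,1] : List ℕ)).flatten := by
  simp [List.replicate_succ]

lemma rep12_succ (k : ℕ) :
    (List.replicate (k+1) ([1,2] : List ℕ)).flatten = 1 :: 2 :: (List.replicate k ([1,2] : List ℕ)).flatten := by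
  simp [List.replicate_succ]

lemma alt21 : ∀ (N : ℕ) (L : List ℕ), L.length ≤ N → (∀ x ∈ L, x = 1 ∨ x = 2) →
    L.head? = some 2 → L.getLastD 0 = 1 → cnt (1,1) L = 0 → cnt (2,2) L = 0 →
    ∃ k, 1 ≤ k ∧ L = (List.replicate k ([2,1] : List ℕ)).flatten := by
  intro N
  induction N with
  | zero =>
    intro L hlen _ hhead _ _ _
    rw [Nat.le_zero, List.length_eq_zero_iff] at hlen
    subst hlen; simp at hhead
  | succ N ih =>
    intro L hlen hmem hhead hlast h11 h22
    match L with
    | [] => simp at hhead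
    | [a] =>
      simp at hhead hlast; omega
    | a :: b :: t =>
      have ha : a = 2 := by simpa using hhead
      subst ha
      have hb : b = 1 := by
        rcases hmem b (by simp) with h | h
        · exact h
        · subst h
          rw [cnt_cons₂] at h22
          simp at h22
      subst hb
      match t with
      | [] => exact ⟨1, le_refl _, by simp⟩
      | c :: t' =>
        have hc : c = 2 := by
          rcases hmem c (by simp) with h | h
          · subst h
            rw [cnt_cons₂, cnt_cons₂] at h11
            simp at h11
          · exact h
        subst hc
        obtain ⟨k, hk, hkL⟩ := ih (2 :: t') (by simp at hlen ⊢; omega)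
          (fun x hx => hmem x (by simp at hx ⊢; tauto))
          (by simp)
          (by simpa [List.getLastD_cons] using hlast)
          (by rw [cnt_cons₂, cnt_cons₂] at h11; omega)
          (by rw [cnt_cons₂, cnt_cons₂] at h22; norm_num [Prod.ext_iff] at h22 ⊢; omega)
        exact ⟨k + 1, by omega, by rw [rep21_succ, ← hkL]⟩

lemma form12 : ∀ (N : ℕ) (L : List ℕ), L.length ≤ N → (∀ x ∈ L, x = 1 ∨ x = 2) →
    L.head? = some 1 → L.getLastD 0 = 1 → cnt (1,1) L = 0 → cnt (2,2) L = 1 →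
    ∃ i k, 1 ≤ i ∧ 1 ≤ k ∧
      L = (List.replicate i ([1,2] : List ℕ)).flatten ++ (List.replicate k ([2,1] : List ℕ)).flatten := by
  intro N
  induction N with
  | zero =>
    intro L hlen _ hhead _ _ _
    rw [Nat.le_zero, List.length_eq_zero_iff] at hlen
    subst hlen; simp at hhead
  | succ N ih =>
    intro L hlen hmem hhead hlast h11 h22
    match L with
    | [] => simp at hhead
    | [a] =>
      rw [cnt_single] at h22; omega
    | a :: b :: t =>
      have ha : a = 1 := by simpa using hhead
      subst ha
      have hb : b = 2 := by
        rcases hmem b (by simp) with h | h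
        · subst h
          rw [cnt_cons₂] at h11
          simp at h11
        · exact h
      subst hb
      match t with
      | [] => simp [List.getLastD_cons] at hlast
      | c :: t' =>
        rcases hmem c (by simp) with hc | hc
        · -- c = 1 : recurse on 1 :: t'
          subst hc
          obtain ⟨i, k, hi, hk, hL⟩ := ih (1 :: t') (by simp at hlen ⊢; omega)
            (fun x hx => hmem x (by simp at hx ⊢; tauto))
            (by simp)
            (by simpa [List.getLastD_cons] using hlast)
            (by rw [cnt_cons₂, cnt_cons₂] at h11; norm_num [Prod.ext_iff] at h11 ⊢; omega)
            (by rw [cnt_cons₂, cnt_cons₂] at h22; norm_num [Prod.ext_iff] at h22 ⊢; omega)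
          refine ⟨i + 1, k, by omega, hk, ?_⟩
          rw [rep12_succ, List.cons_append, List.cons_append, ← hL]
        · -- c = 2 : the double 2, rest alternates 2,1
          subst hc
          obtain ⟨k, hk, hkL⟩ := alt21 N (2 :: t') (by simp at hlen ⊢; omega)
            (fun x hx => hmem x (by simp at hx ⊢; tauto))
            (by simp)
            (by simpa [List.getLastD_cons] using hlast)
            (by rw [cnt_cons₂, cnt_cons₂] at h11; norm_num [Prod.ext_iff] at h11 ⊢; omega)
            (by rw [cnt_cons₂, cnt_cons₂] at h22; norm_num [Prod.ext_iff] at h22 ⊢; omega)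
          refine ⟨1, k, le_refl _, hk, ?_⟩
          rw [← hkL]; simp


lemma gv11 : gpair fAZI 1 1 = 2187/64 := by norm_num [gpair, fAZI]
lemma gv12 : gpair fAZI 1 2 = 5184/125 + 16 - 729/32 := by norm_num [gpair, fAZI]
lemma gv21 : gpair fAZI 2 1 = 1728/125 + 729/32 := by norm_num [gpair, fAZI]
lemma gv22 : gpair fAZI 2 2 = 512/27 + 16 := by norm_num [gpair, fAZI]
lemma gov1 : gone fAZI 1 = 2187/64 := by norm_num [gone, fAZI]
lemma gov2 : gone fAZI 2 = 3456/125 + 16 - 729/64 := by norm_num [gone, fAZI]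

lemma cs_rep12 (f : ℕ → ℕ → ℝ) : ∀ (j : ℕ) (t : List ℕ),
    chainSum f 2 ((List.replicate j ([1,2] : List ℕ)).flatten ++ t)
      = j * (gpair f 2 1 + gpair f 1 2) + chainSum f 2 t := by
  intro j
  induction j with
  | zero => intro t; simp
  | succ j ih =>
    intro t
    rw [rep12_succ]
    simp only [List.cons_append, chainSum, List.append_eq]
    rw [ih]
    push_cast; ring

lemma cs_rep21 (f : ℕ → ℕ → ℝ) : ∀ (k : ℕ),
    chainSum f 1 ((List.replicate k ([2,1] : List ℕ)).flatten)
      = k * (gpair f 1 2 + gpair f 2 1) := by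
  intro k
  induction k with
  | zero => simp [chainSum]
  | succ k ih =>
    rw [rep21_succ]
    simp only [chainSum]
    rw [ih]
    push_cast; ring

lemma TIphi (f : ℕ → ℕ → ℝ) (i k : ℕ) (hi : 1 ≤ i) (hk : 1 ≤ k) :
    TI f ((List.replicate i ([1,2] : List ℕ)).flatten ++ (List.replicate k ([2,1] : List ℕ)).flatten)
      = cst f + gone f 1 + gpair f 2 2 + ((i : ℝ) + k - 1) * (gpair f 1 2 + gpair f 2 1) := by
  obtain ⟨i, rfl⟩ : ∃ j, i = j + 1 := ⟨i - 1, by omega⟩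
  obtain ⟨k, rfl⟩ : ∃ j, k = j + 1 := ⟨k - 1, by omega⟩
  rw [rep12_succ, rep21_succ]
  simp only [List.cons_append, TI, chainSum, List.append_eq]
  rw [cs_rep12]
  simp only [chainSum]
  rw [cs_rep21]
  push_cast; ring

lemma lastD_mem : ∀ (t : List ℕ) (a d : ℕ), (a :: t).getLastD d ∈ a :: t := by
  intro t
  induction t with
  | nil => intro a d; simp
  | cons b t ih =>
    intro a d
    rw [List.getLastD_cons]
    exact List.mem_cons_of_mem _ (ih b a)

/-- The maximum value of `TI fAZI` over link vectors of even length `2q`. -/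
def Bv (q : ℕ) : ℝ := cst fAZI + gone fAZI 1 + gpair fAZI 2 2
  + ((q : ℝ) - 1) * (gpair fAZI 1 2 + gpair fAZI 2 1)

lemma key (q : ℕ) (hq : 1 ≤ q) (a : ℕ) (t : List ℕ)
    (hlen : (a :: t).length = 2 * q)
    (hmem : ∀ x ∈ a :: t, x = 1 ∨ x = 2) :
    TI fAZI (a :: t) ≤ Bv q ∧
    (TI fAZI (a :: t) = Bv q →
      a = 1 ∧ (a :: t).getLastD 0 = 1 ∧ cnt (1,1) (a::t) = 0 ∧ cnt (2,2) (a::t) = 1) := by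
  have hTI : TI fAZI (a :: t) = cst fAZI + gone fAZI a + chainSum fAZI a t := rfl
  have hsum := cs_counts fAZI t a hmem
  have hflow := flow t a hmem
  have htot := totalcnt t a hmem
  have hlen' : t.length + 1 = 2 * q := by simpa using hlen
  have hl1 := hmem _ (lastD_mem t a 0)
  rw [hsum] at hTI
  rw [gv11, gv12, gv21, gv22] at hTI
  have rtot : (cnt (1,1) (a::t) : ℝ) + cnt (1,2) (a::t) + cnt (2,1) (a::t) + cnt (2,2) (a::t)
      = 2 * (q : ℝ) - 1 := by
    have h2 : cnt (1,1) (a::t) + cnt (1,2) (a::t) + cnt (2,1) (a::t) + cnt (2,2) (a::t) + 1 = 2*q := by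
      omega
    have := congrArg (fun x : ℕ => (x : ℝ)) h2
    push_cast at this
    linarith
  have r11 : (0:ℝ) ≤ (cnt (1,1) (a::t) : ℝ) := Nat.cast_nonneg _
  have r22 : (0:ℝ) ≤ (cnt (2,2) (a::t) : ℝ) := Nat.cast_nonneg _
  have hBv : Bv q = cst fAZI + 2187/64 + (512/27 + 16)
      + ((q : ℝ) - 1) * ((5184/125 + 16 - 729/32) + (1728/125 + 729/32)) := by
    rw [Bv, gov1, gv12, gv21, gv22]
  rcases hmem a List.mem_cons_self with ha | ha
  · -- a = 1
    subst ha
    rw [gov1] at hTI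
    rcases hl1 with hL | hL
    · -- last = 1 : the potentially optimal case
      rw [hL] at hflow
      norm_num at hflow
      have rflow : (cnt (1,2) (1::t) : ℝ) = (cnt (2,1) (1::t) : ℝ) := by exact_mod_cast hflow
      have nflow : cnt (1,2) (1::t) = cnt (2,1) (1::t) := by exact_mod_cast hflow
      by_cases hopt : cnt (1,1) (1::t) = 0 ∧ cnt (2,2) (1::t) = 1
      · have e1 : (cnt (1,1) (1::t) : ℝ) = 0 := by rw [hopt.1]; norm_num
        have e2 : (cnt (2,2) (1::t) : ℝ) = 1 := by rw [hopt.2]; norm_num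
        have heq : TI fAZI (1 :: t) = Bv q := by
          rw [hTI, hBv]
          linarith
        exact ⟨le_of_eq heq, fun _ => ⟨rfl, hL, hopt.1, hopt.2⟩⟩
      · -- strict inequality
        have hlt : TI fAZI (1 :: t) < Bv q := by
          rcases Nat.eq_zero_or_pos (cnt (1,1) (1::t)) with h0 | hpos
          · -- c11 = 0, c22 ≠ 1, parity forces c22 ≥ 3
            have hc22 : 3 ≤ cnt (2,2) (1::t) := by omega
            have h3 : (3:ℝ) ≤ (cnt (2,2) (1::t) : ℝ) := by exact_mod_cast hc22
            have e1 : (cnt (1,1) (1::t) : ℝ) = 0 := by rw [h0]; norm_num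
            rw [hTI, hBv]
            linarith
          · have : (1:ℝ) ≤ (cnt (1,1) (1::t) : ℝ) := by exact_mod_cast hpos
            rw [hTI, hBv]
            linarith
        exact ⟨le_of_lt hlt, fun h => absurd h (ne_of_lt hlt)⟩
    · -- last = 2 : strictly suboptimal
      rw [hL] at hflow
      norm_num at hflow
      have rflow : (cnt (1,2) (1::t) : ℝ) = (cnt (2,1) (1::t) : ℝ) + 1 := by exact_mod_cast hflow
      have hlt : TI fAZI (1 :: t) < Bv q := by
        rw [hTI, hBv]
        linarith
      exact ⟨le_of_lt hlt, fun h => absurd h (ne_of_lt hlt)⟩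
  · -- a = 2 : strictly suboptimal
    subst ha
    rw [gov2] at hTI
    rcases hl1 with hL | hL
    · rw [hL] at hflow
      norm_num at hflow
      have rflow : (cnt (1,2) (2::t) : ℝ) + 1 = (cnt (2,1) (2::t) : ℝ) := by exact_mod_cast hflow
      have hlt : TI fAZI (2 :: t) < Bv q := by
        rw [hTI, hBv]
        linarith
      exact ⟨le_of_lt hlt, fun h => absurd h (ne_of_lt hlt)⟩
    · rw [hL] at hflow
      norm_num at hflow
      have rflow : (cnt (1,2) (2::t) : ℝ) = (cnt (2,1) (2::t) : ℝ) := by exact_mod_cast hflow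
      have hlt : TI fAZI (2 :: t) < Bv q := by
        rw [hTI, hBv]
        linarith
      exact ⟨le_of_lt hlt, fun h => absurd h (ne_of_lt hlt)⟩

lemma len_rep2 (j x y : ℕ) : ((List.replicate j ([x,y] : List ℕ)).flatten).length = 2*j := by
  induction j with
  | zero => simp
  | succ j ih => simp only [List.replicate_succ, List.flatten_cons, List.length_append, ih,
      List.length_cons, List.length_nil]; omega

lemma mem_rep2 (j x y z : ℕ) (hz : z ∈ (List.replicate j ([x,y] : List ℕ)).flatten) :
    z = x ∨ z = y := by
  simp only [List.mem_flatten, List.mem_replicate] at hz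
  obtain ⟨l, ⟨_, rfl⟩, hzl⟩ := hz
  simpa using hzl

/-- for even `n ≥ 8`, the maximizers of the augmented Zagreb index
are exactly the vectors made of `i` copies of `(1,2)` followed by
`(n-2)/2 - i` copies of `(2,1)`, for `1 ≤ i ≤ (n-4)/2`; there are `(n-6)/2 + 1`
of them. -/
theorem stmt17 :
    ∀ n : ℕ, 8 ≤ n → Even n →
      ({L : List ℕ | ValidLinks n L ∧ ∀ L', ValidLinks n L' → TI fAZI L' ≤ TI fAZI L}
        = {L : List ℕ | ∃ i, 1 ≤ i ∧ i ≤ (n - 4) / 2 ∧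
            L = (List.replicate i ([1, 2] : List ℕ)).flatten ++
                (List.replicate ((n - 2) / 2 - i) ([2, 1] : List ℕ)).flatten}) ∧
      {L : List ℕ | ValidLinks n L ∧ ∀ L', ValidLinks n L' → TI fAZI L' ≤ TI fAZI L}.ncard
        = (n - 6) / 2 + 1 := by
  intro n hn8 heven
  obtain ⟨w, hw⟩ := heven
  set q : ℕ := w - 1 with hqdef
  have hw4 : 4 ≤ w := by omega
  have hq3 : 3 ≤ q := by omega
  have hn2 : n - 2 = 2 * q := by omega
  have hn4 : (n - 4) / 2 = q - 1 := by omega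
  have hn22 : (n - 2) / 2 = q := by omega
  have hn6 : (n - 6) / 2 + 1 = q - 1 := by omega
  -- the family of optimal vectors
  set φ : ℕ → List ℕ := fun i =>
    (List.replicate i ([1,2] : List ℕ)).flatten ++ (List.replicate (q - i) ([2,1] : List ℕ)).flatten
    with hφdef
  have hφvalid : ∀ i, 1 ≤ i → i ≤ q - 1 → ValidLinks n (φ i) := by
    intro i hi1 hi2
    constructor
    · simp only [hφdef, List.length_append, len_rep2]
      omega
    · intro x hx
      simp only [hφdef, List.mem_append] at hx
      rcases hx with hx | hx
      · exact mem_rep2 _ _ _ _ hx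
      · exact Or.symm (mem_rep2 _ _ _ _ hx)
  have hφTI : ∀ i, 1 ≤ i → i ≤ q - 1 → TI fAZI (φ i) = Bv q := by
    intro i hi1 hi2
    have hiq : i ≤ q := by omega
    rw [hφdef]
    rw [TIphi fAZI i (q - i) hi1 (by omega)]
    rw [Nat.cast_sub hiq, Bv]
    ring
  -- every valid vector is below the bound, with equality characterized
  have hub : ∀ L, ValidLinks n L → TI fAZI L ≤ Bv q ∧
      (TI fAZI L = Bv q → ∃ i, 1 ≤ i ∧ i ≤ q - 1 ∧ L = φ i) := by
    intro L hL
    obtain ⟨hlenL, hmemL⟩ := hL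
    match L with
    | [] => simp [hn2] at hlenL; omega
    | a :: t =>
      have hk := key q (by omega) a t (by rw [hlenL]; omega) hmemL
      refine ⟨hk.1, fun heq => ?_⟩
      obtain ⟨ha, hlast, h11, h22⟩ := hk.2 heq
      subst ha
      obtain ⟨i, k, hi, hkk, hform⟩ := form12 (1 :: t).length (1 :: t) (le_refl _)
        hmemL (by simp) hlast h11 h22
      have hlen2 : 2 * i + 2 * k = 2 * q := by
        have := congrArg List.length hform
        simp only [List.length_append, len_rep2] at this
        omega
      refine ⟨i, hi, by omega, ?_⟩
      have hqk : q - i = k := by omega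
      show (1 :: t) = (List.replicate i ([1,2] : List ℕ)).flatten
        ++ (List.replicate (q - i) ([2,1] : List ℕ)).flatten
      rw [hqk]
      exact hform
  -- the set equality
  have hseteq : {L : List ℕ | ValidLinks n L ∧ ∀ L', ValidLinks n L' → TI fAZI L' ≤ TI fAZI L}
      = φ '' (Set.Icc 1 (q - 1)) := by
    ext L
    simp only [Set.mem_setOf_eq, Set.mem_image, Set.mem_Icc]
    constructor
    · rintro ⟨hLv, hLmax⟩
      have h1 : TI fAZI (φ 1) ≤ TI fAZI L := hLmax _ (hφvalid 1 (le_refl _) (by omega))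
      rw [hφTI 1 (le_refl _) (by omega)] at h1
      have heq : TI fAZI L = Bv q := le_antisymm ((hub L hLv).1) h1
      obtain ⟨i, hi1, hi2, hLi⟩ := (hub L hLv).2 heq
      exact ⟨i, ⟨hi1, hi2⟩, hLi.symm⟩
    · rintro ⟨i, ⟨hi1, hi2⟩, rfl⟩
      refine ⟨hφvalid i hi1 hi2, fun L' hL' => ?_⟩
      rw [hφTI i hi1 hi2]
      exact (hub L' hL').1
  have hinj : Set.InjOn φ (Set.Icc 1 (q - 1)) := by
    have hne : ∀ i i' : ℕ, 1 ≤ i → i' ≤ q - 1 → i < i' → φ i ≠ φ i' := by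
      intro i i' hi hi' hii h
      obtain ⟨d, rfl⟩ : ∃ d, i' = i + (d + 1) := ⟨i' - i - 1, by omega⟩
      obtain ⟨e, he⟩ : ∃ e, q - i = e + 1 := ⟨q - i - 1, by omega⟩
      simp only [hφdef] at h
      rw [List.replicate_add, List.flatten_append, List.append_assoc] at h
      have h2 := List.append_cancel_left h
      rw [he, rep21_succ, rep12_succ] at h2
      simp at h2
    intro i hi i' hi' h
    rcases lt_trichotomy i i' with hlt | heq | hlt
    · exact absurd h (hne i i' hi.1 hi'.2 hlt)
    · exact heq
    · exact absurd h.symm (hne i' i hi'.1 hi.2 hlt)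
  constructor
  · rw [hseteq]
    ext L
    simp only [Set.mem_image, Set.mem_Icc, Set.mem_setOf_eq]
    constructor
    · rintro ⟨i, ⟨hi1, hi2⟩, rfl⟩
      refine ⟨i, hi1, by omega, ?_⟩
      simp only [hφdef]
      have h5 : (n-2)/2 - i = q - i := by omega
      rw [h5]
    · rintro ⟨i, hi1, hi2, rfl⟩
      refine ⟨i, ⟨hi1, by omega⟩, ?_⟩
      simp only [hφdef]
      have h5 : (n-2)/2 - i = q - i := by omega
      rw [h5]
  · rw [hseteq, Set.ncard_image_of_injOn hinj, ← Finset.coe_Icc, Set.ncard_coe_finset,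
      Nat.card_Icc]
    omega

end
end
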